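/- arXiv:1512.08562 — 3 statements merged into one kernel-verified Lean document; each statement's English description precedes it below -/
import Mathlib

section
/- The soft-min Bellman operator is a pointwise minimum over policies of the policy-evaluation operators: for every G and every (s,a), B*[G](s,a) = min_π B^π[G](s,a), where the minimum is over all fully supported policies π, and it is achieved by the Gibbs policy π_G(a'|s') = ρ(a'|s') e^{-βG(s',a')} / Σ_{a''} ρ(a''|s') e^{-βG(s'',a'')}. -/
open Finset

section auxlem
variable {A : Type*} [Fintype A] [Nonempty A]

lemma kl_nonneg' (π q : A → ℝ) (hπ : ∀ a, 0 < π a) (hq : ∀ a, 0 < q a)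
    (hπ1 : ∑ a, π a = 1) (hq1 : ∑ a, q a = 1) :
    0 ≤ ∑ a, π a * Real.log (π a / q a) := by
  have key : ∀ a ∈ (Finset.univ : Finset A), π a - q a ≤ π a * Real.log (π a / q a) := by
    intro a _
    have h1 : Real.log (q a / π a) ≤ q a / π a - 1 :=
      Real.log_le_sub_one_of_pos (div_pos (hq a) (hπ a))
    have h2 : π a * Real.log (q a / π a) ≤ q a - π a := by
      have := mul_le_mul_of_nonneg_left h1 (le_of_lt (hπ a))
      rwa [mul_sub, mul_one, mul_div_cancel₀ _ (ne_of_gt (hπ a))] at this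
    have h3 : Real.log (π a / q a) = - Real.log (q a / π a) := by
      rw [← Real.log_inv, inv_div]
    rw [h3]; nlinarith
  have := Finset.sum_le_sum key
  rw [Finset.sum_sub_distrib, hπ1, hq1] at this
  linarith

lemma f_eq (β : ℝ) (hβ : 0 < β) (ρ G π : A → ℝ) (hρ : ∀ a, 0 < ρ a)
    (hπ : ∀ a, 0 < π a) (hπ1 : ∑ a, π a = 1) :
    ∑ a, π a * ((1/β) * Real.log (π a / ρ a) + G a)
      = (1/β) * (∑ a, π a * Real.log (π a /
          (ρ a * Real.exp (-β * G a) / (∑ a'', ρ a'' * Real.exp (-β * G a''))))) -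
        (1/β) * Real.log (∑ a'', ρ a'' * Real.exp (-β * G a'')) := by
  set Z := ∑ a'', ρ a'' * Real.exp (-β * G a'') with hZdef
  have hZ : 0 < Z := Finset.sum_pos (fun a _ => mul_pos (hρ a) (Real.exp_pos _))
    Finset.univ_nonempty
  have hterm : ∀ a, π a * ((1/β) * Real.log (π a / ρ a) + G a)
      = (1/β) * (π a * Real.log (π a / (ρ a * Real.exp (-β * G a) / Z)))
        - (1/β) * Real.log Z * π a := by
    intro a
    have hdiv : π a / (ρ a * Real.exp (-β * G a) / Z)
        = (π a / ρ a) * Real.exp (β * G a) * Z := by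
      rw [neg_mul, Real.exp_neg]
      field_simp
    have hρa := hρ a
    have hπa := hπ a
    have hlog : Real.log (π a / (ρ a * Real.exp (-β * G a) / Z))
        = Real.log (π a / ρ a) + β * G a + Real.log Z := by
      rw [hdiv, Real.log_mul (by positivity) (ne_of_gt hZ),
        Real.log_mul (by positivity) (Real.exp_ne_zero _), Real.log_exp]
    rw [hlog]
    field_simp
    ring
  simp_rw [hterm]
  rw [Finset.sum_sub_distrib, ← Finset.mul_sum, ← Finset.mul_sum, hπ1, mul_one]

lemma gibbs_sum_one (β : ℝ) (ρ G : A → ℝ) (hρ : ∀ a, 0 < ρ a) :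
    ∑ a, ρ a * Real.exp (-β * G a) / (∑ a'', ρ a'' * Real.exp (-β * G a'')) = 1 := by
  have hZ : 0 < ∑ a'', ρ a'' * Real.exp (-β * G a'') :=
    Finset.sum_pos (fun a _ => mul_pos (hρ a) (Real.exp_pos _)) Finset.univ_nonempty
  rw [← Finset.sum_div, div_self hZ.ne']

lemma gibbs_eq (β : ℝ) (hβ : 0 < β) (ρ G : A → ℝ) (hρ : ∀ a, 0 < ρ a) :
    ∑ a, (ρ a * Real.exp (-β * G a) / (∑ a'', ρ a'' * Real.exp (-β * G a''))) *
        ((1/β) * Real.log ((ρ a * Real.exp (-β * G a) /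
          (∑ a'', ρ a'' * Real.exp (-β * G a''))) / ρ a) + G a)
      = -(1/β) * Real.log (∑ a'', ρ a'' * Real.exp (-β * G a'')) := by
  set q : A → ℝ := fun a => ρ a * Real.exp (-β * G a) /
    (∑ a'', ρ a'' * Real.exp (-β * G a'')) with hqdef
  have hZ : 0 < ∑ a'', ρ a'' * Real.exp (-β * G a'') :=
    Finset.sum_pos (fun a _ => mul_pos (hρ a) (Real.exp_pos _)) Finset.univ_nonempty
  have hq : ∀ a, 0 < q a := fun a => div_pos (mul_pos (hρ a) (Real.exp_pos _)) hZ
  have hq1 : ∑ a, q a = 1 := gibbs_sum_one β ρ G hρ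
  rw [f_eq β hβ ρ G q hρ hq hq1]
  have : ∀ a ∈ (Finset.univ : Finset A),
      q a * Real.log (q a / (ρ a * Real.exp (-β * G a) /
        (∑ a'', ρ a'' * Real.exp (-β * G a'')))) = 0 := by
    intro a _
    rw [show ρ a * Real.exp (-β * G a) / (∑ a'', ρ a'' * Real.exp (-β * G a'')) = q a from rfl,
      div_self (hq a).ne', Real.log_one, mul_zero]
  rw [Finset.sum_congr rfl this, Finset.sum_const, smul_zero, mul_zero, zero_sub, neg_mul]

lemma gibbs_le (β : ℝ) (hβ : 0 < β) (ρ G π : A → ℝ) (hρ : ∀ a, 0 < ρ a)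
    (hπ : ∀ a, 0 < π a) (hπ1 : ∑ a, π a = 1) :
    -(1/β) * Real.log (∑ a'', ρ a'' * Real.exp (-β * G a''))
      ≤ ∑ a, π a * ((1/β) * Real.log (π a / ρ a) + G a) := by
  have hZ : 0 < ∑ a'', ρ a'' * Real.exp (-β * G a'') :=
    Finset.sum_pos (fun a _ => mul_pos (hρ a) (Real.exp_pos _)) Finset.univ_nonempty
  set q : A → ℝ := fun a => ρ a * Real.exp (-β * G a) /
    (∑ a'', ρ a'' * Real.exp (-β * G a'')) with hqdef
  have hq : ∀ a, 0 < q a := fun a => div_pos (mul_pos (hρ a) (Real.exp_pos _)) hZ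
  have hq1 : ∑ a, q a = 1 := gibbs_sum_one β ρ G hρ
  rw [f_eq β hβ ρ G π hρ hπ hπ1]
  have hkl : 0 ≤ ∑ a, π a * Real.log (π a / q a) := kl_nonneg' π q hπ hq hπ1 hq1
  have hβ' : 0 < (1/β : ℝ) := by positivity
  simp only [hqdef] at hkl
  nlinarith [mul_nonneg hβ'.le hkl]

end auxlem

/-- Policy-evaluation operator `B^π[G]` including the information cost. -/
noncomputable def Bpi7 {S A : Type*} [Fintype S] [Fintype A]
    (γ β : ℝ) (p : S → A → S → ℝ) (π ρ : S → A → ℝ) (c : S → A → ℝ)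
    (G : S → A → ℝ) : S → A → ℝ :=
  fun s a => c s a + γ * ∑ s', p s a s' *
      ∑ a', π s' a' * ((1 / β) * Real.log (π s' a' / ρ s' a') + G s' a')

/-- Soft-min Bellman operator `B*[G]`. -/
noncomputable def Bstar7 {S A : Type*} [Fintype S] [Fintype A]
    (γ β : ℝ) (p : S → A → S → ℝ) (ρ : S → A → ℝ) (c : S → A → ℝ)
    (G : S → A → ℝ) : S → A → ℝ :=
  fun s a => c s a -
    (γ / β) * ∑ s', p s a s' *
      Real.log (∑ a', ρ s' a' * Real.exp (-β * G s' a'))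

/-- `B*[G] = min_π B^π[G]` pointwise, the minimum over fully supported policies
being achieved by the Gibbs policy `π_G`. -/
theorem bstar_min_over_policies
    {S A : Type*} [Fintype S] [Fintype A] [Nonempty S] [Nonempty A]
    (γ β : ℝ) (hγ0 : 0 ≤ γ) (hγ1 : γ < 1) (hβ : 0 < β)
    (p : S → A → S → ℝ) (hp0 : ∀ s a s', 0 ≤ p s a s')
    (hp1 : ∀ s a, ∑ s', p s a s' = 1)
    (ρ : S → A → ℝ) (hρ0 : ∀ s a, 0 < ρ s a) (hρ1 : ∀ s, ∑ a, ρ s a = 1)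
    (c : S → A → ℝ) (G : S → A → ℝ) :
    let πG : S → A → ℝ := fun s' a' =>
      ρ s' a' * Real.exp (-β * G s' a') / ∑ a'', ρ s' a'' * Real.exp (-β * G s' a'')
    (∀ s a, Bpi7 γ β p πG ρ c G s a = Bstar7 γ β p ρ c G s a) ∧
    (∀ π : S → A → ℝ, (∀ s' a', 0 < π s' a') → (∀ s', ∑ a', π s' a' = 1) →
      ∀ s a, Bstar7 γ β p ρ c G s a ≤ Bpi7 γ β p π ρ c G s a) := by
  intro πG
  have hgibbs : ∀ s', ∑ a', πG s' a' * ((1/β) * Real.log (πG s' a' / ρ s' a') + G s' a')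
      = -(1/β) * Real.log (∑ a', ρ s' a' * Real.exp (-β * G s' a')) :=
    fun s' => gibbs_eq β hβ (ρ s') (G s') (fun a => hρ0 s' a)
  constructor
  · intro s a
    simp only [Bpi7, Bstar7]
    rw [Finset.sum_congr rfl (fun s' _ => by rw [hgibbs s'])]
    have : ∑ s', p s a s' *
        (-(1/β) * Real.log (∑ a', ρ s' a' * Real.exp (-β * G s' a')))
        = -(1/β) * ∑ s', p s a s' *
            Real.log (∑ a', ρ s' a' * Real.exp (-β * G s' a')) := by
      rw [Finset.mul_sum]
      exact Finset.sum_congr rfl fun _ _ => by ring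
    rw [this]; ring
  · intro π hπ0 hπ1 s a
    simp only [Bpi7, Bstar7]
    have hle : ∀ s' ∈ (Finset.univ : Finset S),
        p s a s' * (-(1/β) * Real.log (∑ a', ρ s' a' * Real.exp (-β * G s' a')))
          ≤ p s a s' * ∑ a', π s' a' * ((1/β) * Real.log (π s' a' / ρ s' a') + G s' a') :=
      fun s' _ => mul_le_mul_of_nonneg_left
        (gibbs_le β hβ (ρ s') (G s') (π s') (fun a => hρ0 s' a) (fun a => hπ0 s' a) (hπ1 s'))
        (hp0 s a s')
    have hsum := Finset.sum_le_sum hle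
    have heq : ∑ s', p s a s' *
        (-(1/β) * Real.log (∑ a', ρ s' a' * Real.exp (-β * G s' a')))
        = -(1/β) * ∑ s', p s a s' *
            Real.log (∑ a', ρ s' a' * Real.exp (-β * G s' a')) := by
      rw [Finset.mul_sum]
      exact Finset.sum_congr rfl fun _ _ => by ring
    rw [heq] at hsum
    have := mul_le_mul_of_nonneg_left hsum hγ0
    have hβne : β ≠ 0 := hβ.ne'
    have : γ * (-(1/β) * ∑ s', p s a s' *
        Real.log (∑ a', ρ s' a' * Real.exp (-β * G s' a')))
        = -((γ/β) * ∑ s', p s a s' *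
            Real.log (∑ a', ρ s' a' * Real.exp (-β * G s' a'))) := by ring
    linarith [mul_le_mul_of_nonneg_left hsum hγ0]
end

section
/- In the limit β → ∞ with fully supported prior ρ, the fixed point G*_β of the soft-min Bellman operator converges pointwise to the optimal Q-function Q*, the unique fixed point of the standard Bellman optimality operator T[Q](s,a) = c̄(s,a) + γ Σ_{s'} p(s'|s,a) min_{a'} Q(s',a'). -/
open Finset Real Filter

/-- Soft Bellman operator with inverse temperature `β`. -/
noncomputable def BstarB {S A : Type*} [Fintype S] [Fintype A]
    (γ : ℝ) (p : S → A → S → ℝ) (ρ : S → A → ℝ) (c : S → A → ℝ)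
    (β : ℝ) (G : S → A → ℝ) : S → A → ℝ :=
  fun s a => c s a -
    (γ / β) * ∑ s', p s a s' *
      Real.log (∑ a', ρ s' a' * Real.exp (-β * G s' a'))

/-- Bellman optimality operator. -/
noncomputable def Topt {S A : Type*} [Fintype S] [Fintype A] [Nonempty A]
    (γ : ℝ) (p : S → A → S → ℝ) (c : S → A → ℝ) (Q : S → A → ℝ) : S → A → ℝ :=
  fun s a => c s a + γ * ∑ s',
    p s a s' * Finset.univ.inf' Finset.univ_nonempty (fun a' => Q s' a')

/-- The inf' is Lipschitz w.r.t. sup distance. -/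
lemma my_inf'_abs_sub {A : Type*} [Fintype A] [Nonempty A]
    (f g : A → ℝ) (M : ℝ) (h : ∀ a, |f a - g a| ≤ M) :
    |univ.inf' univ_nonempty f - univ.inf' univ_nonempty g| ≤ M := by
  rw [abs_sub_le_iff]
  constructor
  · obtain ⟨b, -, hb⟩ := Finset.exists_mem_eq_inf' (univ_nonempty) g
    have h1 : univ.inf' univ_nonempty f ≤ f b := Finset.inf'_le _ (mem_univ b)
    have h2 := (abs_le.1 (h b)).2
    rw [hb]; linarith
  · obtain ⟨b, -, hb⟩ := Finset.exists_mem_eq_inf' (univ_nonempty) f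
    have h1 : univ.inf' univ_nonempty g ≤ g b := Finset.inf'_le _ (mem_univ b)
    have h2 := (abs_le.1 (h b)).1
    rw [hb]; linarith

/-- Soft-min approximates min. -/
lemma my_softmin_bound {A : Type*} [Fintype A] [Nonempty A]
    (ρ : A → ℝ) (hρ0 : ∀ a, 0 < ρ a) (hρ1 : ∑ a, ρ a = 1)
    (G : A → ℝ) {β : ℝ} (hβ : 0 < β) :
    |(-(1/β)) * Real.log (∑ a, ρ a * Real.exp (-β * G a)) - univ.inf' univ_nonempty G|
      ≤ (-Real.log (univ.inf' univ_nonempty ρ)) / β := by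
  set m := univ.inf' univ_nonempty G with hm
  set r := univ.inf' univ_nonempty ρ with hr
  set E := ∑ a, ρ a * Real.exp (-β * G a) with hE
  have hr0 : 0 < r := by
    obtain ⟨b, -, hb⟩ := Finset.exists_mem_eq_inf' (univ_nonempty) ρ
    rw [hr, hb]; exact hρ0 b
  have hE0 : 0 < E :=
    Finset.sum_pos (fun a _ => mul_pos (hρ0 a) (Real.exp_pos _)) univ_nonempty
  have hupper : E ≤ Real.exp (-β * m) := by
    calc E ≤ ∑ a, ρ a * Real.exp (-β * m) := by
          refine Finset.sum_le_sum fun a _ => ?_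
          refine mul_le_mul_of_nonneg_left (Real.exp_le_exp.2 ?_) (hρ0 a).le
          have := Finset.inf'_le G (mem_univ a)
          nlinarith
      _ = Real.exp (-β * m) := by rw [← Finset.sum_mul, hρ1, one_mul]
  have hlower : r * Real.exp (-β * m) ≤ E := by
    obtain ⟨b, -, hb⟩ := Finset.exists_mem_eq_inf' (univ_nonempty) G
    have h1 : r ≤ ρ b := Finset.inf'_le _ (mem_univ b)
    calc r * Real.exp (-β * m) ≤ ρ b * Real.exp (-β * G b) := by
          rw [hm, hb]; exact mul_le_mul_of_nonneg_right h1 (Real.exp_pos _).le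
      _ ≤ E := Finset.single_le_sum (f := fun a => ρ a * Real.exp (-β * G a))
          (fun a _ => (mul_pos (hρ0 a) (Real.exp_pos _)).le) (mem_univ b)
  have l1 : Real.log E ≤ -β * m := by
    have := Real.log_le_log hE0 hupper
    rwa [Real.log_exp] at this
  have l2 : Real.log r + (-β * m) ≤ Real.log E := by
    have := Real.log_le_log (mul_pos hr0 (Real.exp_pos _)) hlower
    rwa [Real.log_mul hr0.ne' (Real.exp_ne_zero _), Real.log_exp] at this
  have hβ' : (0:ℝ) < 1/β := by positivity
  rw [abs_le]
  constructor
  · have h3 := mul_le_mul_of_nonneg_left l1 hβ'.le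
    have h4 : (1/β) * (-β * m) = -m := by field_simp
    have h5 : Real.log r ≤ 0 := by
      have hr1 : r ≤ 1 := by
        obtain ⟨b, -, hb⟩ := Finset.exists_mem_eq_inf' (univ_nonempty) ρ
        rw [hr, hb, ← hρ1]
        exact Finset.single_le_sum (fun a _ => (hρ0 a).le) (mem_univ b)
      exact Real.log_nonpos hr0.le hr1
    have h6 : Real.log r / β ≤ 0 := by rw [div_nonpos_iff]; exact Or.inr ⟨h5, hβ.le⟩
    rw [neg_div]; linarith
  · have h3 := mul_le_mul_of_nonneg_left l2 hβ'.le
    have h4 : (1/β) * (Real.log r + (-β * m)) = Real.log r / β - m := by field_simp; ring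
    rw [neg_div]; linarith

/-- As `β → ∞`, the fixed point `G*_β` of the soft Bellman operator converges
pointwise to the optimal `Q*`, the fixed point of the Bellman optimality operator. -/
theorem soft_fixed_point_tendsto_qstar
    {S A : Type*} [Fintype S] [Fintype A] [Nonempty S] [Nonempty A]
    (γ : ℝ) (hγ0 : 0 ≤ γ) (hγ1 : γ < 1)
    (p : S → A → S → ℝ) (hp0 : ∀ s a s', 0 ≤ p s a s')
    (hp1 : ∀ s a, ∑ s', p s a s' = 1)
    (ρ : S → A → ℝ) (hρ0 : ∀ s a, 0 < ρ s a) (hρ1 : ∀ s, ∑ a, ρ s a = 1)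
    (c : S → A → ℝ)
    (Qstar : S → A → ℝ) (hQ : Topt γ p c Qstar = Qstar)
    (Gstar : ℝ → S → A → ℝ)
    (hG : ∀ β : ℝ, 0 < β → BstarB γ p ρ c β (Gstar β) = Gstar β) :
    ∀ s a, Tendsto (fun β : ℝ => Gstar β s a) atTop (nhds (Qstar s a)) := by
  -- the constant L = max_s (- log min_a ρ(a|s))
  set L : ℝ := univ.sup' univ_nonempty
      (fun s' : S => -Real.log (univ.inf' univ_nonempty (ρ s'))) with hLdef
  have hLs : ∀ s' : S, -Real.log (univ.inf' univ_nonempty (ρ s')) ≤ L := by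
    intro s'
    exact Finset.le_sup' (f := fun s' : S => -Real.log (univ.inf' univ_nonempty (ρ s')))
      (mem_univ s')
  have hL0 : 0 ≤ L := by
    obtain ⟨s0⟩ := (inferInstance : Nonempty S)
    refine le_trans ?_ (hLs s0)
    have hr0 : 0 < univ.inf' univ_nonempty (ρ s0) := by
      obtain ⟨b, -, hb⟩ := Finset.exists_mem_eq_inf' (univ_nonempty) (ρ s0)
      rw [hb]; exact hρ0 s0 b
    have hr1 : univ.inf' univ_nonempty (ρ s0) ≤ 1 := by
      obtain ⟨b, -, hb⟩ := Finset.exists_mem_eq_inf' (univ_nonempty) (ρ s0)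
      rw [hb, ← hρ1 s0]
      exact Finset.single_le_sum (fun a _ => (hρ0 s0 a).le) (mem_univ b)
    have := Real.log_nonpos hr0.le hr1
    linarith
  set C : ℝ := γ * L / (1 - γ) with hCdef
  have key : ∀ β : ℝ, 0 < β → ∀ s a, |Gstar β s a - Qstar s a| ≤ C / β := by
    intro β hβ
    set M : ℝ := univ.sup' univ_nonempty
        (fun pr : S × A => |Gstar β pr.1 pr.2 - Qstar pr.1 pr.2|) with hMdef
    have hM : ∀ s' a', |Gstar β s' a' - Qstar s' a'| ≤ M := fun s' a' =>
      Finset.le_sup' (f := fun pr : S × A => |Gstar β pr.1 pr.2 - Qstar pr.1 pr.2|)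
        (mem_univ (s', a'))
    have step : ∀ s a, |Gstar β s a - Qstar s a| ≤ γ * L / β + γ * M := by
      intro s a
      have key_eq : Gstar β s a - Qstar s a =
          γ * ∑ s', p s a s' *
            ((-(1/β) * Real.log (∑ a', ρ s' a' * Real.exp (-β * Gstar β s' a'))) -
              univ.inf' univ_nonempty (fun a' => Qstar s' a')) := by
        conv_lhs => rw [← hG β hβ, ← hQ]
        simp only [BstarB, Topt]
        rw [Finset.mul_sum, Finset.mul_sum, Finset.mul_sum]
        rw [show (∑ s', γ * (p s a s' *
            ((-(1/β) * Real.log (∑ a', ρ s' a' * Real.exp (-β * Gstar β s' a'))) -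
              univ.inf' univ_nonempty (fun a' => Qstar s' a')))) =
          ∑ s', (-(γ / β * (p s a s' *
              Real.log (∑ a', ρ s' a' * Real.exp (-β * Gstar β s' a')))) -
            γ * (p s a s' * univ.inf' univ_nonempty (fun a' => Qstar s' a')))
          from Finset.sum_congr rfl fun s' _ => by ring]
        rw [Finset.sum_sub_distrib, Finset.sum_neg_distrib]
        ring
      have hterm : ∀ s',
          |(-(1/β) * Real.log (∑ a', ρ s' a' * Real.exp (-β * Gstar β s' a'))) -
            univ.inf' univ_nonempty (fun a' => Qstar s' a')| ≤ L / β + M := by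
        intro s'
        have h1 : |(-(1/β) * Real.log (∑ a', ρ s' a' * Real.exp (-β * Gstar β s' a'))) -
            univ.inf' univ_nonempty (fun a' => Gstar β s' a')| ≤ L / β := by
          refine le_trans
            (my_softmin_bound (ρ s') (hρ0 s') (hρ1 s') (fun a' => Gstar β s' a') hβ) ?_
          gcongr
          exact hLs s'
        have h2 : |univ.inf' univ_nonempty (fun a' => Gstar β s' a') -
            univ.inf' univ_nonempty (fun a' => Qstar s' a')| ≤ M :=
          my_inf'_abs_sub _ _ M (fun a' => hM s' a')
        calc |(-(1/β) * Real.log (∑ a', ρ s' a' * Real.exp (-β * Gstar β s' a'))) -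
            univ.inf' univ_nonempty (fun a' => Qstar s' a')| ≤ _ + _ := abs_sub_le _ _ _
          _ ≤ L / β + M := add_le_add h1 h2
      calc |Gstar β s a - Qstar s a|
          = γ * |∑ s', p s a s' *
              ((-(1/β) * Real.log (∑ a', ρ s' a' * Real.exp (-β * Gstar β s' a'))) -
                univ.inf' univ_nonempty (fun a' => Qstar s' a'))| := by
            rw [key_eq, abs_mul, abs_of_nonneg hγ0]
        _ ≤ γ * (L / β + M) := by
            refine mul_le_mul_of_nonneg_left ?_ hγ0
            calc |∑ s', p s a s' *
                ((-(1/β) * Real.log (∑ a', ρ s' a' * Real.exp (-β * Gstar β s' a'))) -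
                  univ.inf' univ_nonempty (fun a' => Qstar s' a'))|
                ≤ ∑ s', |p s a s' *
                  ((-(1/β) * Real.log (∑ a', ρ s' a' * Real.exp (-β * Gstar β s' a'))) -
                    univ.inf' univ_nonempty (fun a' => Qstar s' a'))| :=
                  Finset.abs_sum_le_sum_abs _ _
              _ ≤ ∑ s', p s a s' * (L / β + M) := by
                  refine Finset.sum_le_sum fun s' _ => ?_
                  rw [abs_mul, abs_of_nonneg (hp0 s a s')]
                  exact mul_le_mul_of_nonneg_left (hterm s') (hp0 s a s')
              _ = L / β + M := by rw [← Finset.sum_mul, hp1, one_mul]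
        _ = γ * L / β + γ * M := by ring
    have hMle : M ≤ γ * L / β + γ * M :=
      Finset.sup'_le _ _ fun pr _ => step pr.1 pr.2
    have hM2 : M ≤ C / β := by
      have h1 : M ≤ (γ * L / β) / (1 - γ) := by
        rw [le_div_iff₀ (by linarith)]
        nlinarith
      calc M ≤ (γ * L / β) / (1 - γ) := h1
        _ = C / β := by rw [hCdef]; ring
    intro s a
    exact (hM s a).trans hM2
  intro s a
  have h0 : Tendsto (fun β : ℝ => Gstar β s a - Qstar s a) atTop (nhds 0) := by
    refine squeeze_zero_norm' ?_ (Tendsto.div_atTop (tendsto_const_nhds (x := C)) tendsto_id)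
    filter_upwards [eventually_gt_atTop (0:ℝ)] with β hβ
    rw [Real.norm_eq_abs]
    exact key β hβ s a
  have := h0.add (tendsto_const_nhds (x := Qstar s a))
  simpa using this
end

section
/- The fixed point G*_β of the soft Bellman operator satisfies Q*(s,a) ≤ G*_β(s,a) ≤ Q^ρ(s,a) for all (s,a) and all β > 0, where Q* is the optimal Q-function and Q^ρ is the Q-function of the prior policy ρ. -/
open Finset Real

/-- Soft Bellman operator with inverse temperature `β`. -/
noncomputable def BstarB15 {S A : Type*} [Fintype S] [Fintype A]
    (γ : ℝ) (p : S → A → S → ℝ) (ρ : S → A → ℝ) (c : S → A → ℝ)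
    (β : ℝ) (G : S → A → ℝ) : S → A → ℝ :=
  fun s a => c s a -
    (γ / β) * ∑ s', p s a s' *
      Real.log (∑ a', ρ s' a' * Real.exp (-β * G s' a'))

/-- Bellman optimality operator. -/
noncomputable def Topt15 {S A : Type*} [Fintype S] [Fintype A] [Nonempty A]
    (γ : ℝ) (p : S → A → S → ℝ) (c : S → A → ℝ) (Q : S → A → ℝ) : S → A → ℝ :=
  fun s a => c s a + γ * ∑ s',
    p s a s' * Finset.univ.inf' Finset.univ_nonempty (fun a' => Q s' a')

/-- Policy-evaluation Bellman operator for the prior policy `ρ`. -/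
noncomputable def Trho15 {S A : Type*} [Fintype S] [Fintype A]
    (γ : ℝ) (p : S → A → S → ℝ) (ρ : S → A → ℝ) (c : S → A → ℝ)
    (Q : S → A → ℝ) : S → A → ℝ :=
  fun s a => c s a + γ * ∑ s', p s a s' * ∑ a', ρ s' a' * Q s' a'

section Aux

variable {A : Type*} [Fintype A] [Nonempty A]

lemma aux_softsum_pos (ρ : A → ℝ) (hρ : ∀ a, 0 < ρ a) (g : A → ℝ) :
    0 < ∑ a, ρ a * Real.exp (g a) :=
  Finset.sum_pos (fun a _ => mul_pos (hρ a) (Real.exp_pos _)) Finset.univ_nonempty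

/-- min ≤ soft-min -/
lemma aux_min_le_softmin (β : ℝ) (hβ : 0 < β) (ρ : A → ℝ) (hρ0 : ∀ a, 0 < ρ a)
    (hρ1 : ∑ a, ρ a = 1) (f : A → ℝ) :
    Finset.univ.inf' Finset.univ_nonempty f ≤
      -β⁻¹ * Real.log (∑ a, ρ a * Real.exp (-β * f a)) := by
  set m := Finset.univ.inf' Finset.univ_nonempty f with hm
  have hS : ∑ a, ρ a * Real.exp (-β * f a) ≤ Real.exp (-β * m) := by
    calc ∑ a, ρ a * Real.exp (-β * f a) ≤ ∑ a, ρ a * Real.exp (-β * m) := by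
          refine Finset.sum_le_sum fun a _ => ?_
          refine mul_le_mul_of_nonneg_left ?_ (hρ0 a).le
          refine Real.exp_le_exp.2 ?_
          have : m ≤ f a := Finset.inf'_le _ (Finset.mem_univ a)
          nlinarith
      _ = Real.exp (-β * m) := by rw [← Finset.sum_mul, hρ1, one_mul]
  have hpos : 0 < ∑ a, ρ a * Real.exp (-β * f a) := aux_softsum_pos ρ hρ0 _
  have hlog := Real.log_le_log hpos hS
  rw [Real.log_exp] at hlog
  have hβ' : 0 < β⁻¹ := inv_pos.2 hβ
  have h1 : β⁻¹ * Real.log (∑ a, ρ a * Real.exp (-β * f a)) ≤ β⁻¹ * (-β * m) :=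
    mul_le_mul_of_nonneg_left hlog hβ'.le
  have h2 : β⁻¹ * (-β * m) = -m := by field_simp
  linarith

/-- soft-min ≤ weighted average (Jensen) -/
lemma aux_softmin_le_avg (β : ℝ) (hβ : 0 < β) (ρ : A → ℝ) (hρ0 : ∀ a, 0 < ρ a)
    (hρ1 : ∑ a, ρ a = 1) (f : A → ℝ) :
    -β⁻¹ * Real.log (∑ a, ρ a * Real.exp (-β * f a)) ≤ ∑ a, ρ a * f a := by
  have hjen : Real.exp (∑ a, ρ a • (-β * f a)) ≤ ∑ a, ρ a • Real.exp (-β * f a) :=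
    convexOn_exp.map_sum_le (fun a _ => (hρ0 a).le) hρ1 (fun a _ => Set.mem_univ _)
  simp only [smul_eq_mul] at hjen
  have hpos : 0 < ∑ a, ρ a * Real.exp (-β * f a) := aux_softsum_pos ρ hρ0 _
  have hlog : ∑ a, ρ a * (-β * f a) ≤ Real.log (∑ a, ρ a * Real.exp (-β * f a)) := by
    have := Real.log_le_log (Real.exp_pos _) hjen
    rwa [Real.log_exp] at this
  have hsum : ∑ a, ρ a * (-β * f a) = -β * ∑ a, ρ a * f a := by
    rw [Finset.mul_sum]; exact Finset.sum_congr rfl fun a _ => by ring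
  rw [hsum] at hlog
  have hβ' : 0 < β⁻¹ := inv_pos.2 hβ
  have h1 : β⁻¹ * (-β * ∑ a, ρ a * f a) ≤
      β⁻¹ * Real.log (∑ a, ρ a * Real.exp (-β * f a)) :=
    mul_le_mul_of_nonneg_left hlog hβ'.le
  have h2 : β⁻¹ * (-β * ∑ a, ρ a * f a) = -(∑ a, ρ a * f a) := by field_simp
  linarith

end Aux

/-- The soft fixed point is squeezed between the optimal `Q*` and the prior policy's
`Q^ρ`: `Q*(s,a) ≤ G*_β(s,a) ≤ Q^ρ(s,a)`. -/
theorem soft_fixed_point_sandwich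
    {S A : Type*} [Fintype S] [Fintype A] [Nonempty S] [Nonempty A]
    (γ : ℝ) (hγ0 : 0 ≤ γ) (hγ1 : γ < 1) (β : ℝ) (hβ : 0 < β)
    (p : S → A → S → ℝ) (hp0 : ∀ s a s', 0 ≤ p s a s')
    (hp1 : ∀ s a, ∑ s', p s a s' = 1)
    (ρ : S → A → ℝ) (hρ0 : ∀ s a, 0 < ρ s a) (hρ1 : ∀ s, ∑ a, ρ s a = 1)
    (c : S → A → ℝ)
    (Qstar : S → A → ℝ) (hQ : Topt15 γ p c Qstar = Qstar)
    (Qrho : S → A → ℝ) (hQρ : Trho15 γ p ρ c Qrho = Qrho)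
    (Gstar : S → A → ℝ) (hG : BstarB15 γ p ρ c β Gstar = Gstar) :
    ∀ s a, Qstar s a ≤ Gstar s a ∧ Gstar s a ≤ Qrho s a := by
  set L : S → ℝ := fun s' => Real.log (∑ a', ρ s' a' * Real.exp (-β * Gstar s' a')) with hL
  -- Part 1 : Qstar ≤ Gstar
  have part1 : ∀ s a, Qstar s a ≤ Gstar s a := by
    set M : ℝ := (Finset.univ : Finset (S × A)).sup' Finset.univ_nonempty
      (fun q => Qstar q.1 q.2 - Gstar q.1 q.2) with hM
    have hle : ∀ s a, Qstar s a - Gstar s a ≤ M := fun s a =>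
      Finset.le_sup' (f := fun q : S × A => Qstar q.1 q.2 - Gstar q.1 q.2)
        (Finset.mem_univ (s, a))
    obtain ⟨⟨s0, a0⟩, -, hmax⟩ := Finset.exists_mem_eq_sup' Finset.univ_nonempty
      (fun q : S × A => Qstar q.1 q.2 - Gstar q.1 q.2)
    have hmax' : M = Qstar s0 a0 - Gstar s0 a0 := by rw [hM]; exact hmax
    have key : ∀ s' : S,
        Finset.univ.inf' Finset.univ_nonempty (fun a' => Qstar s' a') + β⁻¹ * L s' ≤ M := by
      intro s'
      have h1 : Finset.univ.inf' Finset.univ_nonempty (fun a' => Qstar s' a') - M ≤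
          Finset.univ.inf' Finset.univ_nonempty (fun a' => Gstar s' a') := by
        rw [Finset.le_inf'_iff]
        intro a' _
        have hq : Finset.univ.inf' Finset.univ_nonempty (fun a' => Qstar s' a') ≤
            Qstar s' a' := Finset.inf'_le _ (Finset.mem_univ a')
        have := hle s' a'
        linarith
      have h2 : Finset.univ.inf' Finset.univ_nonempty (fun a' => Gstar s' a') ≤
          -β⁻¹ * L s' :=
        aux_min_le_softmin β hβ (ρ s') (hρ0 s') (hρ1 s') (Gstar s')
      linarith
    have hMeq : M = γ * ∑ s', p s0 a0 s' *
        (Finset.univ.inf' Finset.univ_nonempty (fun a' => Qstar s' a') + β⁻¹ * L s') := by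
      have e1 : Qstar s0 a0 = c s0 a0 + γ * ∑ s',
          p s0 a0 s' * Finset.univ.inf' Finset.univ_nonempty (fun a' => Qstar s' a') := by
        conv_lhs => rw [← hQ]
        rfl
      have e2 : Gstar s0 a0 = c s0 a0 - (γ / β) * ∑ s', p s0 a0 s' * L s' := by
        conv_lhs => rw [← hG]
        rfl
      have hsplit : ∑ s', p s0 a0 s' *
          (Finset.univ.inf' Finset.univ_nonempty (fun a' => Qstar s' a') + β⁻¹ * L s')
          = (∑ s', p s0 a0 s' * Finset.univ.inf' Finset.univ_nonempty (fun a' => Qstar s' a'))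
            + β⁻¹ * ∑ s', p s0 a0 s' * L s' := by
        rw [Finset.mul_sum, ← Finset.sum_add_distrib]
        exact Finset.sum_congr rfl fun s' _ => by ring
      rw [hmax', e1, e2, hsplit]
      field_simp
      ring
    have hMle : M ≤ γ * M := by
      calc M = γ * ∑ s', p s0 a0 s' *
            (Finset.univ.inf' Finset.univ_nonempty (fun a' => Qstar s' a') + β⁻¹ * L s') :=
          hMeq
        _ ≤ γ * M := by
          refine mul_le_mul_of_nonneg_left ?_ hγ0
          calc ∑ s', p s0 a0 s' *
                (Finset.univ.inf' Finset.univ_nonempty (fun a' => Qstar s' a') + β⁻¹ * L s')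
              ≤ ∑ s', p s0 a0 s' * M :=
                Finset.sum_le_sum fun s' _ =>
                  mul_le_mul_of_nonneg_left (key s') (hp0 s0 a0 s')
            _ = M := by rw [← Finset.sum_mul, hp1, one_mul]
    have hM0 : M ≤ 0 := by nlinarith
    intro s a
    have := hle s a
    linarith
  -- Part 2 : Gstar ≤ Qrho
  have part2 : ∀ s a, Gstar s a ≤ Qrho s a := by
    set M : ℝ := (Finset.univ : Finset (S × A)).sup' Finset.univ_nonempty
      (fun q => Gstar q.1 q.2 - Qrho q.1 q.2) with hM
    have hle : ∀ s a, Gstar s a - Qrho s a ≤ M := fun s a =>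
      Finset.le_sup' (f := fun q : S × A => Gstar q.1 q.2 - Qrho q.1 q.2)
        (Finset.mem_univ (s, a))
    obtain ⟨⟨s0, a0⟩, -, hmax⟩ := Finset.exists_mem_eq_sup' Finset.univ_nonempty
      (fun q : S × A => Gstar q.1 q.2 - Qrho q.1 q.2)
    have hmax' : M = Gstar s0 a0 - Qrho s0 a0 := by rw [hM]; exact hmax
    have key : ∀ s' : S, -β⁻¹ * L s' - ∑ a', ρ s' a' * Qrho s' a' ≤ M := by
      intro s'
      have h1 : -β⁻¹ * L s' ≤ ∑ a', ρ s' a' * Gstar s' a' :=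
        aux_softmin_le_avg β hβ (ρ s') (hρ0 s') (hρ1 s') (Gstar s')
      have h2 : ∑ a', ρ s' a' * Gstar s' a' ≤ M + ∑ a', ρ s' a' * Qrho s' a' := by
        calc ∑ a', ρ s' a' * Gstar s' a'
            ≤ ∑ a', ρ s' a' * (M + Qrho s' a') := by
              refine Finset.sum_le_sum fun a' _ => ?_
              have := hle s' a'
              nlinarith [(hρ0 s' a').le]
          _ = ∑ a', (ρ s' a' * M + ρ s' a' * Qrho s' a') :=
              Finset.sum_congr rfl fun a' _ => by ring
          _ = M + ∑ a', ρ s' a' * Qrho s' a' := by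
              rw [Finset.sum_add_distrib, ← Finset.sum_mul, hρ1, one_mul]
      linarith
    have hMeq : M = γ * ∑ s', p s0 a0 s' *
        (-β⁻¹ * L s' - ∑ a', ρ s' a' * Qrho s' a') := by
      have e1 : Gstar s0 a0 = c s0 a0 - (γ / β) * ∑ s', p s0 a0 s' * L s' := by
        conv_lhs => rw [← hG]
        rfl
      have e2 : Qrho s0 a0 = c s0 a0 + γ * ∑ s',
          p s0 a0 s' * ∑ a', ρ s' a' * Qrho s' a' := by
        conv_lhs => rw [← hQρ]
        rfl
      have hsplit : ∑ s', p s0 a0 s' * (-β⁻¹ * L s' - ∑ a', ρ s' a' * Qrho s' a')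
          = -β⁻¹ * (∑ s', p s0 a0 s' * L s')
            - ∑ s', p s0 a0 s' * ∑ a', ρ s' a' * Qrho s' a' := by
        rw [Finset.mul_sum, ← Finset.sum_sub_distrib]
        exact Finset.sum_congr rfl fun s' _ => by ring
      rw [hmax', e1, e2, hsplit]
      field_simp
      ring
    have hMle : M ≤ γ * M := by
      calc M = γ * ∑ s', p s0 a0 s' *
            (-β⁻¹ * L s' - ∑ a', ρ s' a' * Qrho s' a') := hMeq
        _ ≤ γ * M := by
          refine mul_le_mul_of_nonneg_left ?_ hγ0
          calc ∑ s', p s0 a0 s' * (-β⁻¹ * L s' - ∑ a', ρ s' a' * Qrho s' a')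
              ≤ ∑ s', p s0 a0 s' * M :=
                Finset.sum_le_sum fun s' _ =>
                  mul_le_mul_of_nonneg_left (key s') (hp0 s0 a0 s')
            _ = M := by rw [← Finset.sum_mul, hp1, one_mul]
    have hM0 : M ≤ 0 := by nlinarith
    intro s a
    have := hle s a
    linarith
  exact fun s a => ⟨part1 s a, part2 s a⟩
end
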